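/- Limit ratio of KL and QKL: for a fixed probability distribution p on a finite set with full support, as q → p (with q a full-support distribution on the same set), the ratio D_KL(p‖q)/D_QKL(p‖q) → 1, where D_QKL(p‖q) = Σ_x p(x)·½(ln p(x) − ln q(x))². Consequently, for every δ > 0 there exists ε > 0 such that D_QKL(p‖q) ≤ ε and q ≠ p imply |D_KL(p‖q)/D_QKL(p‖q) − 1| ≤ δ. -/

import Mathlib

/-!
Write `u = log p - log q`, so that `q = p e^{-u}`. Since `∑ q = ∑ p`, the KL divergence equals
`∑ p (e^{-u} - 1 + u)`, and the integrand is `u²/2 + O(|u|³)`. Hence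
`|D_KL - D_QKL| ≤ (4/9) (max |u|) D_QKL`, and `max |u| → 0` both as `q → p` (continuity of `log`)
and as `D_QKL → 0` (because `D_QKL ≥ p x u(x)²/2` for every `x`).
-/

open Filter Topology Real Finset

lemma abs_exp_sub_quadratic_le {v : ℝ} (hv : |v| ≤ 1) :
    |exp v - (1 + v + v ^ 2 / 2)| ≤ 2 / 9 * |v| ^ 3 := by
  have h := Real.exp_bound hv (n := 3) (by norm_num)
  norm_num [sum_range_succ, Nat.factorial] at h
  linarith

lemma abs_exp_neg_sub_one_add_sub_sq_le {u t : ℝ} (hu : |u| ≤ t) (ht : t ≤ 1) :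
    |exp (-u) - 1 + u - u ^ 2 / 2| ≤ 2 / 9 * t * u ^ 2 := by
  have h := abs_exp_sub_quadratic_le (v := -u) (by rw [abs_neg]; linarith)
  calc |exp (-u) - 1 + u - u ^ 2 / 2| = |exp (-u) - (1 + -u + (-u) ^ 2 / 2)| := by ring_nf
    _ ≤ 2 / 9 * |u| ^ 3 := by rwa [abs_neg] at h
    _ = 2 / 9 * (|u| * u ^ 2) := by rw [← sq_abs u]; ring
    _ ≤ 2 / 9 * t * u ^ 2 := by rw [mul_assoc]; gcongr

lemma exists_pos_forall_lt {ι : Type*} [Finite ι] {f : ι → ℝ} (hf : ∀ i, 0 < f i) :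
    ∃ ε > 0, ∀ i, ε < f i := by
  have hlt : ∀ᶠ ε in 𝓝[>] (0 : ℝ), ∀ i, ε < f i :=
    eventually_all.2 fun i => (eventually_lt_nhds (hf i)).filter_mono nhdsWithin_le_nhds
  exact (eventually_mem_nhdsWithin.and hlt).exists

lemma eventually_forall_abs_log_sub_lt {S : Type*} [Finite S] {p : S → ℝ} (hp : ∀ x, p x ≠ 0)
    {t : ℝ} (ht : 0 < t) : ∀ᶠ q in 𝓝 p, ∀ x, |log (p x) - log (q x)| < t := by
  refine eventually_all.2 fun x => ?_
  have hlog : Tendsto (fun q : S → ℝ => log (q x)) (𝓝 p) (𝓝 (log (p x))) :=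
    ((continuous_apply x).tendsto p).log (hp x)
  filter_upwards [Metric.tendsto_nhds.1 hlog t ht] with q hq
  rwa [abs_sub_comm, ← Real.dist_eq]

noncomputable section

variable {S : Type*} [Fintype S] {p q : S → ℝ}

def discreteKL (p q : S → ℝ) : ℝ :=
  ∑ x, p x * log (p x / q x)

def discreteQKL (p q : S → ℝ) : ℝ :=
  ∑ x, p x * ((1 / 2) * (log (p x) - log (q x)) ^ 2)

lemma discreteKL_eq_sum_exp (hp : ∀ x, 0 < p x) (hq : ∀ x, 0 < q x)
    (hpq : ∑ x, q x = ∑ x, p x) :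
    discreteKL p q =
      ∑ x, p x * (exp (-(log (p x) - log (q x))) - 1 + (log (p x) - log (q x))) := by
  have hexp : ∀ x, p x * exp (-(log (p x) - log (q x))) = q x := fun x => by
    rw [neg_sub, exp_sub, exp_log (hp x), exp_log (hq x)]
    field_simp [(hp x).ne']
  calc discreteKL p q = ∑ x, p x * (log (p x) - log (q x)) :=
        sum_congr rfl fun x _ => by rw [log_div (hp x).ne' (hq x).ne']
    _ = (∑ x, q x - ∑ x, p x) + ∑ x, p x * (log (p x) - log (q x)) := by
        rw [hpq, sub_self, zero_add]
    _ = _ := by simp only [mul_add, mul_sub, mul_one, hexp, sum_add_distrib, sum_sub_distrib]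

lemma abs_discreteKL_sub_discreteQKL_le (hp : ∀ x, 0 < p x) (hq : ∀ x, 0 < q x)
    (hpq : ∑ x, q x = ∑ x, p x) {t : ℝ} (ht : t ≤ 1)
    (hu : ∀ x, |log (p x) - log (q x)| ≤ t) :
    |discreteKL p q - discreteQKL p q| ≤ 4 / 9 * t * discreteQKL p q := by
  rw [discreteKL_eq_sum_exp hp hq hpq, discreteQKL, ← sum_sub_distrib, mul_sum]
  refine (abs_sum_le_sum_abs _ _).trans (sum_le_sum fun x _ => ?_)
  set u := log (p x) - log (q x)
  calc |p x * (exp (-u) - 1 + u) - p x * ((1 / 2) * u ^ 2)|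
      = p x * |exp (-u) - 1 + u - u ^ 2 / 2| := by
        rw [← mul_sub, abs_mul, abs_of_pos (hp x)]; ring_nf
    _ ≤ p x * (2 / 9 * t * u ^ 2) :=
        mul_le_mul_of_nonneg_left (abs_exp_neg_sub_one_add_sub_sq_le (hu x) ht) (hp x).le
    _ = 4 / 9 * t * (p x * ((1 / 2) * u ^ 2)) := by ring

lemma discreteQKL_pos (hp : ∀ x, 0 < p x) (hq : ∀ x, 0 < q x) (hne : q ≠ p) :
    0 < discreteQKL p q := by
  obtain ⟨x, hx⟩ := Function.ne_iff.1 hne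
  have hu : log (p x) - log (q x) ≠ 0 :=
    sub_ne_zero.2 fun h => hx (log_injOn_pos (hq x) (hp x) h.symm)
  refine sum_pos' (fun y _ => mul_nonneg (hp y).le (by positivity)) ⟨x, mem_univ x, ?_⟩
  exact mul_pos (hp x) (mul_pos one_half_pos (pow_two_pos_of_ne_zero hu))

lemma abs_discreteKL_div_discreteQKL_sub_one_le (hp : ∀ x, 0 < p x) (hq : ∀ x, 0 < q x)
    (hpq : ∑ x, q x = ∑ x, p x) (hne : q ≠ p) {t : ℝ} (ht : t ≤ 1)
    (hu : ∀ x, |log (p x) - log (q x)| ≤ t) :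
    |discreteKL p q / discreteQKL p q - 1| ≤ 4 / 9 * t := by
  have hQ := discreteQKL_pos hp hq hne
  rw [div_sub_one hQ.ne', abs_div, abs_of_pos hQ, div_le_iff₀ hQ]
  exact abs_discreteKL_sub_discreteQKL_le hp hq hpq ht hu

lemma abs_log_sub_le_of_discreteQKL_le (hp : ∀ x, 0 < p x) {t : ℝ} (ht : 0 ≤ t) (x : S)
    (hQ : discreteQKL p q ≤ p x * t ^ 2 / 2) : |log (p x) - log (q x)| ≤ t := by
  have hterm : p x * ((1 / 2) * (log (p x) - log (q x)) ^ 2) ≤ discreteQKL p q :=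
    single_le_sum (f := fun y => p y * ((1 / 2) * (log (p y) - log (q y)) ^ 2))
      (fun y _ => mul_nonneg (hp y).le (by positivity)) (mem_univ x)
  refine abs_le_of_sq_le_sq ?_ ht
  nlinarith [hp x]

end

theorem kl_qkl_ratio_tendsto_one_general
    {S : Type*} [Fintype S] (p : S → ℝ)
    (hp : ∀ x, 0 < p x) (hps : ∑ x, p x = 1) :
    Tendsto (fun q : S → ℝ =>
        (∑ x, p x * Real.log (p x / q x)) /
          (∑ x, p x * ((1 / 2) * (Real.log (p x) - Real.log (q x)) ^ 2)))
      (nhdsWithin p {q : S → ℝ | (∀ x, 0 < q x) ∧ (∑ x, q x = 1) ∧ q ≠ p})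
      (nhds 1) ∧
    ∀ δ > (0 : ℝ), ∃ ε > (0 : ℝ), ∀ q : S → ℝ,
      (∀ x, 0 < q x) → (∑ x, q x = 1) →
      (∑ x, p x * ((1 / 2) * (Real.log (p x) - Real.log (q x)) ^ 2)) ≤ ε → q ≠ p →
      |(∑ x, p x * Real.log (p x / q x)) /
          (∑ x, p x * ((1 / 2) * (Real.log (p x) - Real.log (q x)) ^ 2)) - 1| ≤ δ := by
  have hratio : ∀ {q : S → ℝ} {t : ℝ}, (∀ x, 0 < q x) → ∑ x, q x = 1 → q ≠ p → t ≤ 1 →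
      (∀ x, |log (p x) - log (q x)| ≤ t) → |discreteKL p q / discreteQKL p q - 1| ≤ 4 / 9 * t :=
    fun hq hqs hne ht hu =>
      abs_discreteKL_div_discreteQKL_sub_one_le hp hq (hqs.trans hps.symm) hne ht hu
  constructor
  · refine Metric.tendsto_nhds.2 fun ε hε => ?_
    have hlog := eventually_forall_abs_log_sub_lt (fun x => (hp x).ne') (lt_min one_pos hε)
    filter_upwards [eventually_nhdsWithin_of_eventually_nhds hlog, self_mem_nhdsWithin]
      with q hu ⟨hq, hqs, hne⟩
    calc dist (discreteKL p q / discreteQKL p q) 1 ≤ 4 / 9 * min 1 ε :=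
          hratio hq hqs hne (min_le_left _ _) fun x => (hu x).le
      _ < ε := by linarith [min_le_right 1 ε]
  · intro δ hδ
    set t := min 1 δ
    have ht : 0 < t := lt_min one_pos hδ
    have hpt : ∀ x, 0 < p x * t ^ 2 / 2 := fun x => by have := hp x; positivity
    obtain ⟨ε, hε, hεp⟩ := exists_pos_forall_lt hpt
    refine ⟨ε, hε, fun q hq hqs hQ hne => ?_⟩
    calc |discreteKL p q / discreteQKL p q - 1| ≤ 4 / 9 * t :=
          hratio hq hqs hne (min_le_left _ _) fun x =>
            abs_log_sub_le_of_discreteQKL_le hp ht.le x (hQ.trans (hεp x).le)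
      _ ≤ δ := by linarith [min_le_right 1 δ]

/-- Limit ratio of KL and QKL: for a fixed full-support distribution `p` on a finite
set, as `q → p` through full-support distributions distinct from `p`, the ratio
`D_KL(p‖q)/D_QKL(p‖q) → 1`. Consequently, for every `δ > 0` there exists `ε > 0`
such that `D_QKL(p‖q) ≤ ε` and `q ≠ p` imply `|D_KL(p‖q)/D_QKL(p‖q) − 1| ≤ δ`. -/
theorem kl_qkl_ratio_tendsto_one
    {S : Type*} [Fintype S] [Nonempty S] (p : S → ℝ)
    (hp : ∀ x, 0 < p x) (hps : ∑ x, p x = 1) :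
    Tendsto (fun q : S → ℝ =>
        (∑ x, p x * Real.log (p x / q x)) /
          (∑ x, p x * ((1 / 2) * (Real.log (p x) - Real.log (q x)) ^ 2)))
      (nhdsWithin p {q : S → ℝ | (∀ x, 0 < q x) ∧ (∑ x, q x = 1) ∧ q ≠ p})
      (nhds 1) ∧
    ∀ δ > (0 : ℝ), ∃ ε > (0 : ℝ), ∀ q : S → ℝ,
      (∀ x, 0 < q x) → (∑ x, q x = 1) →
      (∑ x, p x * ((1 / 2) * (Real.log (p x) - Real.log (q x)) ^ 2)) ≤ ε → q ≠ p →
      |(∑ x, p x * Real.log (p x / q x)) /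
          (∑ x, p x * ((1 / 2) * (Real.log (p x) - Real.log (q x)) ^ 2)) - 1| ≤ δ :=
  kl_qkl_ratio_tendsto_one_general p hp hps
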